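/- arXiv:2412.16018 — 2 statements merged into one kernel-verified Lean document; each statement's English description precedes it below -/
import Mathlib

section
/- The 3-prism graph (the complement of the 6-cycle; equivalently, two disjoint triangles a1a2a3 and b1b2b3 joined by the perfect matching a1b1, a2b2, a3b3) has exactly one NAC-colouring up to swapping the two colours, namely the colouring in which the two triangles are blue and the three matching edges are red. -/
open scoped Classical

namespace NAC

variable {V : Type*}

/-- Number of edges of `G` in the list `l` whose colour under `c` is `b`. -/
noncomputable def cCount (G : SimpleGraph V) (c : G.edgeSet → Bool) (b : Bool)
    (l : List (Sym2 V)) : ℕ :=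
  (l.filter fun e => decide (∃ h : e ∈ G.edgeSet, c ⟨e, h⟩ = b)).length

/-- `c` is a NAC-colouring of `G`: it is surjective (both colours are used) and no
cycle of `G` contains exactly one edge of either colour. -/
def IsNAC (G : SimpleGraph V) (c : G.edgeSet → Bool) : Prop :=
  Function.Surjective c ∧
  ∀ ⦃u : V⦄ (w : G.Walk u u), w.IsCycle →
    cCount G c true w.edges ≠ 1 ∧ cCount G c false w.edges ≠ 1

/-- The number of NAC-colourings of `G`, divided by two. -/
noncomputable def nacNum (G : SimpleGraph V) : ℕ :=
  {c : G.edgeSet → Bool | IsNAC G c}.ncard / 2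

end NAC

namespace NAC

/-- The 3-prism: triangles `{0,1,2}` and `{3,4,5}` joined by the matching
`0-3`, `1-4`, `2-5`. -/
def prism : SimpleGraph (Fin 6) :=
  SimpleGraph.fromRel (fun u v =>
    (u.val < 3 ∧ v.val < 3) ∨ (3 ≤ u.val ∧ 3 ≤ v.val) ∨ v.val = u.val + 3)

/-- Whether an edge of the prism is one of the three matching edges. -/
noncomputable def isMatchingEdge : Sym2 (Fin 6) → Bool :=
  fun e => decide (∃ u v : Fin 6, e = s(u, v) ∧ v.val = u.val + 3)

end NAC

namespace NAC

lemma cCount_nil (G : SimpleGraph (Fin 6)) (c : G.edgeSet → Bool) (b : Bool) :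
    cCount G c b [] = 0 := rfl

lemma cCount_cons (G : SimpleGraph (Fin 6)) (c : G.edgeSet → Bool) (b : Bool)
    (e : Sym2 (Fin 6)) (l : List (Sym2 (Fin 6))) (h : e ∈ G.edgeSet) :
    cCount G c b (e :: l) = (if c ⟨e, h⟩ = b then 1 else 0) + cCount G c b l := by
  unfold cCount
  rw [List.filter_cons]
  have key : (decide (∃ h : e ∈ G.edgeSet, c ⟨e, h⟩ = b) = true) ↔ c ⟨e, h⟩ = b := by
    rw [decide_eq_true_iff]
    exact ⟨fun ⟨h', hc⟩ => hc, fun hc => ⟨h, hc⟩⟩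
  split_ifs with h1 h2 h2
  · simp [Nat.add_comm]
  · exact absurd (key.1 h1) h2
  · exact absurd (key.2 h2) h1
  · simp

lemma isMatchingEdge_iff (e : Sym2 (Fin 6)) :
    isMatchingEdge e = true ↔ (∃ u v : Fin 6, e = s(u, v) ∧ v.val = u.val + 3) := by
  simp [isMatchingEdge]

lemma match_true : ∀ u v : Fin 6, prism.Adj u v →
    (isMatchingEdge s(u,v) = true ↔ (decide (3 ≤ u.val) ≠ decide (3 ≤ v.val))) := by
  intro u v h
  rw [isMatchingEdge_iff]
  rw [prism, SimpleGraph.fromRel_adj] at h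
  revert h; revert u v
  decide

lemma match_false : ∀ u v : Fin 6, prism.Adj u v →
    (isMatchingEdge s(u,v) = false ↔ ((u.val % 3 : ℕ) ≠ (v.val % 3 : ℕ))) := by
  intro u v h
  rw [Bool.eq_false_iff, Ne, isMatchingEdge_iff]
  rw [prism, SimpleGraph.fromRel_adj] at h
  revert h; revert u v
  decide

lemma count_walk {A : Type} [DecidableEq A] {G : SimpleGraph (Fin 6)}
    (c : G.edgeSet → Bool) (b : Bool) (f : Fin 6 → A)
    (hc : ∀ (u v : Fin 6) (h : G.Adj u v), (c ⟨s(u,v), G.mem_edgeSet.2 h⟩ = b ↔ f u ≠ f v)) :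
    ∀ {u v : Fin 6} (w : G.Walk u v),
      (cCount G c b w.edges = 0 → f u = f v) ∧ (cCount G c b w.edges = 1 → f u ≠ f v) := by
  intro u v w
  induction w with
  | nil => simp [cCount_nil]
  | @cons u x v h p ih =>
    rw [SimpleGraph.Walk.edges_cons, cCount_cons _ _ _ _ _ (G.mem_edgeSet.2 h)]
    by_cases hcol : c ⟨s(u,x), G.mem_edgeSet.2 h⟩ = b
    · have hne : f u ≠ f x := (hc u x h).1 hcol
      rw [if_pos hcol]
      constructor
      · omega
      · intro h1
        have h0 : cCount G c b p.edges = 0 := by omega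
        rw [← ih.1 h0]
        exact hne
    · have heq : f u = f x := by
        by_contra hne
        exact hcol ((hc u x h).2 hne)
      rw [if_neg hcol]
      constructor
      · intro h0
        rw [heq]; exact ih.1 (by omega)
      · intro h1
        rw [heq]; exact ih.2 (by omega)

lemma edge_cases (e : Sym2 (Fin 6)) (he : e ∈ prism.edgeSet) :
    e = s(0,1) ∨ e = s(1,2) ∨ e = s(0,2) ∨ e = s(3,4) ∨ e = s(4,5) ∨ e = s(3,5) ∨
    e = s(0,3) ∨ e = s(1,4) ∨ e = s(2,5) := by
  induction e with
  | _ u v =>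
    rw [SimpleGraph.mem_edgeSet, prism, SimpleGraph.fromRel_adj] at he
    revert he; revert u v
    decide

-- adjacency facts
lemma adj01 : prism.Adj 0 1 := by rw [prism, SimpleGraph.fromRel_adj]; decide
lemma adj12 : prism.Adj 1 2 := by rw [prism, SimpleGraph.fromRel_adj]; decide
lemma adj20 : prism.Adj 2 0 := by rw [prism, SimpleGraph.fromRel_adj]; decide
lemma adj34 : prism.Adj 3 4 := by rw [prism, SimpleGraph.fromRel_adj]; decide
lemma adj45 : prism.Adj 4 5 := by rw [prism, SimpleGraph.fromRel_adj]; decide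
lemma adj53 : prism.Adj 5 3 := by rw [prism, SimpleGraph.fromRel_adj]; decide
lemma adj14 : prism.Adj 1 4 := by rw [prism, SimpleGraph.fromRel_adj]; decide
lemma adj43 : prism.Adj 4 3 := adj34.symm
lemma adj30 : prism.Adj 3 0 := by rw [prism, SimpleGraph.fromRel_adj]; decide
lemma adj25 : prism.Adj 2 5 := by rw [prism, SimpleGraph.fromRel_adj]; decide
lemma adj54 : prism.Adj 5 4 := adj45.symm
lemma adj41 : prism.Adj 4 1 := adj14.symm
lemma adj02 : prism.Adj 0 2 := adj20.symm
lemma adj03 : prism.Adj 0 3 := adj30.symm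
lemma adj35 : prism.Adj 3 5 := adj53.symm
lemma adj52 : prism.Adj 5 2 := adj25.symm

-- isMatchingEdge values
lemma v01 : isMatchingEdge s((0:Fin 6),1) = false := by
  rw [Bool.eq_false_iff, Ne, isMatchingEdge_iff]; decide
lemma v12 : isMatchingEdge s((1:Fin 6),2) = false := by
  rw [Bool.eq_false_iff, Ne, isMatchingEdge_iff]; decide
lemma v02 : isMatchingEdge s((0:Fin 6),2) = false := by
  rw [Bool.eq_false_iff, Ne, isMatchingEdge_iff]; decide
lemma v34 : isMatchingEdge s((3:Fin 6),4) = false := by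
  rw [Bool.eq_false_iff, Ne, isMatchingEdge_iff]; decide
lemma v45 : isMatchingEdge s((4:Fin 6),5) = false := by
  rw [Bool.eq_false_iff, Ne, isMatchingEdge_iff]; decide
lemma v35 : isMatchingEdge s((3:Fin 6),5) = false := by
  rw [Bool.eq_false_iff, Ne, isMatchingEdge_iff]; decide
lemma v03 : isMatchingEdge s((0:Fin 6),3) = true := by
  rw [isMatchingEdge_iff]; exact ⟨0, 3, rfl, rfl⟩
lemma v14 : isMatchingEdge s((1:Fin 6),4) = true := by
  rw [isMatchingEdge_iff]; exact ⟨1, 4, rfl, rfl⟩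
lemma v25 : isMatchingEdge s((2:Fin 6),5) = true := by
  rw [isMatchingEdge_iff]; exact ⟨2, 5, rfl, rfl⟩

lemma tri : ∀ a b c : Bool,
    ((if a = true then 1 else 0) + ((if b = true then 1 else 0) +
      ((if c = true then 1 else 0) + 0)) ≠ 1) →
    ((if a = false then 1 else 0) + ((if b = false then 1 else 0) +
      ((if c = false then 1 else 0) + 0)) ≠ 1) →
    a = b ∧ b = c := by decide

lemma quad : ∀ a q d p : Bool,
    ((if a = true then 1 else 0) + ((if q = true then 1 else 0) +
      ((if d = true then 1 else 0) + ((if p = true then 1 else 0) + 0))) ≠ 1) →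
    ((if a = false then 1 else 0) + ((if q = false then 1 else 0) +
      ((if d = false then 1 else 0) + ((if p = false then 1 else 0) + 0))) ≠ 1) →
    xor (xor a q) (xor d p) = false := by decide

lemma finlem : ∀ a b c d e f p q r : Bool,
    a = b → b = c → d = e → e = f →
    xor (xor a q) (xor d p) = false →
    xor (xor b r) (xor e q) = false →
    xor (xor c p) (xor f r) = false →
    (a || b || c || d || e || f || p || q || r) = true →
    (!a || !b || !c || !d || !e || !f || !p || !q || !r) = true →
    ((!a && !b && !c && !d && !e && !f && p && q && r) ||
     (a && b && c && d && e && f && !p && !q && !r)) = true := by decide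

end NAC

open NAC in
/-- The 3-prism has exactly one NAC-colouring up to swapping colours: the two triangles
get one colour and the three matching edges the other. -/
theorem statement8 (c : prism.edgeSet → Bool) :
    IsNAC prism c ↔
      ((∀ e : prism.edgeSet, c e = isMatchingEdge (e : Sym2 (Fin 6))) ∨
       (∀ e : prism.edgeSet, c e = !isMatchingEdge (e : Sym2 (Fin 6)))) := by
  constructor
  · rintro ⟨hsurj, hcyc⟩
    -- the five relevant cycles
    let T1 : prism.Walk 0 0 := .cons adj01 (.cons adj12 (.cons adj20 .nil))
    let T2 : prism.Walk 3 3 := .cons adj34 (.cons adj45 (.cons adj53 .nil))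
    let Q1 : prism.Walk 0 0 := .cons adj01 (.cons adj14 (.cons adj43 (.cons adj30 .nil)))
    let Q2 : prism.Walk 1 1 := .cons adj12 (.cons adj25 (.cons adj54 (.cons adj41 .nil)))
    let Q3 : prism.Walk 2 2 := .cons adj20 (.cons adj03 (.cons adj35 (.cons adj52 .nil)))
    have cT1 : T1.IsCycle := by
      rw [SimpleGraph.Walk.isCycle_def, SimpleGraph.Walk.isTrail_def]
      refine ⟨by decide, by simp [T1], by decide⟩
    have cT2 : T2.IsCycle := by
      rw [SimpleGraph.Walk.isCycle_def, SimpleGraph.Walk.isTrail_def]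
      refine ⟨by decide, by simp [T2], by decide⟩
    have cQ1 : Q1.IsCycle := by
      rw [SimpleGraph.Walk.isCycle_def, SimpleGraph.Walk.isTrail_def]
      refine ⟨by decide, by simp [Q1], by decide⟩
    have cQ2 : Q2.IsCycle := by
      rw [SimpleGraph.Walk.isCycle_def, SimpleGraph.Walk.isTrail_def]
      refine ⟨by decide, by simp [Q2], by decide⟩
    have cQ3 : Q3.IsCycle := by
      rw [SimpleGraph.Walk.isCycle_def, SimpleGraph.Walk.isTrail_def]
      refine ⟨by decide, by simp [Q3], by decide⟩
    -- memberships
    have m01 := prism.mem_edgeSet.2 adj01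
    have m12 := prism.mem_edgeSet.2 adj12
    have m20 := prism.mem_edgeSet.2 adj20
    have m34 := prism.mem_edgeSet.2 adj34
    have m45 := prism.mem_edgeSet.2 adj45
    have m53 := prism.mem_edgeSet.2 adj53
    have m14 := prism.mem_edgeSet.2 adj14
    have m43 := prism.mem_edgeSet.2 adj43
    have m30 := prism.mem_edgeSet.2 adj30
    have m25 := prism.mem_edgeSet.2 adj25
    have m54 := prism.mem_edgeSet.2 adj54
    have m41 := prism.mem_edgeSet.2 adj41
    have m03 := prism.mem_edgeSet.2 adj03
    have m35 := prism.mem_edgeSet.2 adj35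
    have m52 := prism.mem_edgeSet.2 adj52
    have m02 := prism.mem_edgeSet.2 adj02
    -- canonical edge points
    set A := c ⟨s(0,1), m01⟩ with hA
    set B := c ⟨s(1,2), m12⟩ with hB
    set C := c ⟨s(0,2), m02⟩ with hC
    set D := c ⟨s(3,4), m34⟩ with hD
    set E := c ⟨s(4,5), m45⟩ with hE
    set F := c ⟨s(3,5), m35⟩ with hF
    set P := c ⟨s(0,3), m03⟩ with hP
    set Q := c ⟨s(1,4), m14⟩ with hQ
    set R := c ⟨s(2,5), m25⟩ with hR
    -- identify swapped-orientation edges with canonical ones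
    have e20 : (⟨s(2,0), m20⟩ : prism.edgeSet) = ⟨s(0,2), m02⟩ :=
      Subtype.ext (Sym2.eq_swap)
    have e53 : (⟨s(5,3), m53⟩ : prism.edgeSet) = ⟨s(3,5), m35⟩ :=
      Subtype.ext (Sym2.eq_swap)
    have e43 : (⟨s(4,3), m43⟩ : prism.edgeSet) = ⟨s(3,4), m34⟩ :=
      Subtype.ext (Sym2.eq_swap)
    have e30 : (⟨s(3,0), m30⟩ : prism.edgeSet) = ⟨s(0,3), m03⟩ :=
      Subtype.ext (Sym2.eq_swap)
    have e54 : (⟨s(5,4), m54⟩ : prism.edgeSet) = ⟨s(4,5), m45⟩ :=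
      Subtype.ext (Sym2.eq_swap)
    have e41 : (⟨s(4,1), m41⟩ : prism.edgeSet) = ⟨s(1,4), m14⟩ :=
      Subtype.ext (Sym2.eq_swap)
    have e52 : (⟨s(5,2), m52⟩ : prism.edgeSet) = ⟨s(2,5), m25⟩ :=
      Subtype.ext (Sym2.eq_swap)
    -- cycle count hypotheses, rewritten
    obtain ⟨hT1t, hT1f⟩ := hcyc T1 cT1
    obtain ⟨hT2t, hT2f⟩ := hcyc T2 cT2
    obtain ⟨hQ1t, hQ1f⟩ := hcyc Q1 cQ1
    obtain ⟨hQ2t, hQ2f⟩ := hcyc Q2 cQ2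
    obtain ⟨hQ3t, hQ3f⟩ := hcyc Q3 cQ3
    have edgesT1 : T1.edges = [s(0,1), s(1,2), s(2,0)] := rfl
    have edgesT2 : T2.edges = [s(3,4), s(4,5), s(5,3)] := rfl
    have edgesQ1 : Q1.edges = [s(0,1), s(1,4), s(4,3), s(3,0)] := rfl
    have edgesQ2 : Q2.edges = [s(1,2), s(2,5), s(5,4), s(4,1)] := rfl
    have edgesQ3 : Q3.edges = [s(2,0), s(0,3), s(3,5), s(5,2)] := rfl
    rw [edgesT1, cCount_cons _ _ _ _ _ m01, cCount_cons _ _ _ _ _ m12,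
      cCount_cons _ _ _ _ _ m20, cCount_nil, e20] at hT1t hT1f
    rw [edgesT2, cCount_cons _ _ _ _ _ m34, cCount_cons _ _ _ _ _ m45,
      cCount_cons _ _ _ _ _ m53, cCount_nil, e53] at hT2t hT2f
    rw [edgesQ1, cCount_cons _ _ _ _ _ m01, cCount_cons _ _ _ _ _ m14,
      cCount_cons _ _ _ _ _ m43, cCount_cons _ _ _ _ _ m30, cCount_nil, e43, e30] at hQ1t hQ1f
    rw [edgesQ2, cCount_cons _ _ _ _ _ m12, cCount_cons _ _ _ _ _ m25,
      cCount_cons _ _ _ _ _ m54, cCount_cons _ _ _ _ _ m41, cCount_nil, e54, e41] at hQ2t hQ2f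
    rw [edgesQ3, cCount_cons _ _ _ _ _ m20, cCount_cons _ _ _ _ _ m03,
      cCount_cons _ _ _ _ _ m35, cCount_cons _ _ _ _ _ m52, cCount_nil, e20, e52] at hQ3t hQ3f
    -- surjectivity disjunctions
    have hs1 : (A || B || C || D || E || F || P || Q || R) = true := by
      obtain ⟨⟨ev, em⟩, hce⟩ := hsurj true
      rcases edge_cases ev em with rfl|rfl|rfl|rfl|rfl|rfl|rfl|rfl|rfl
      · simp [show A = true from hce]
      · simp [show B = true from hce]
      · simp [show C = true from hce]
      · simp [show D = true from hce]
      · simp [show E = true from hce]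
      · simp [show F = true from hce]
      · simp [show P = true from hce]
      · simp [show Q = true from hce]
      · simp [show R = true from hce]
    have hs0 : (!A || !B || !C || !D || !E || !F || !P || !Q || !R) = true := by
      obtain ⟨⟨ev, em⟩, hce⟩ := hsurj false
      rcases edge_cases ev em with rfl|rfl|rfl|rfl|rfl|rfl|rfl|rfl|rfl
      · simp [show A = false from hce]
      · simp [show B = false from hce]
      · simp [show C = false from hce]
      · simp [show D = false from hce]
      · simp [show E = false from hce]
      · simp [show F = false from hce]
      · simp [show P = false from hce]
      · simp [show Q = false from hce]
      · simp [show R = false from hce]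
    obtain ⟨tAB, tBC⟩ := tri A B C hT1t hT1f
    obtain ⟨tDE, tEF⟩ := tri D E F hT2t hT2f
    have x1 := quad A Q D P hQ1t hQ1f
    have x2 := quad B R E Q hQ2t hQ2f
    have x3 := quad C P F R hQ3t hQ3f
    have final := finlem A B C D E F P Q R tAB tBC tDE tEF x1 x2 x3 hs1 hs0
    rw [Bool.or_eq_true, Bool.and_eq_true, Bool.and_eq_true, Bool.and_eq_true,
      Bool.and_eq_true, Bool.and_eq_true, Bool.and_eq_true, Bool.and_eq_true,
      Bool.and_eq_true, Bool.and_eq_true, Bool.and_eq_true, Bool.and_eq_true,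
      Bool.and_eq_true, Bool.and_eq_true, Bool.and_eq_true, Bool.and_eq_true,
      Bool.and_eq_true, Bool.not_eq_true', Bool.not_eq_true', Bool.not_eq_true',
      Bool.not_eq_true', Bool.not_eq_true', Bool.not_eq_true', Bool.not_eq_true',
      Bool.not_eq_true', Bool.not_eq_true'] at final
    rcases final with ⟨⟨⟨⟨⟨⟨⟨⟨ha, hb⟩, hc'⟩, hd⟩, he⟩, hf⟩, hp⟩, hq⟩, hr⟩ |
        ⟨⟨⟨⟨⟨⟨⟨⟨ha, hb⟩, hc'⟩, hd⟩, he⟩, hf⟩, hp⟩, hq⟩, hr⟩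
    · left
      rintro ⟨ev, em⟩
      rcases edge_cases ev em with rfl|rfl|rfl|rfl|rfl|rfl|rfl|rfl|rfl
      · rw [v01]; exact ha
      · rw [v12]; exact hb
      · rw [v02]; exact hc'
      · rw [v34]; exact hd
      · rw [v45]; exact he
      · rw [v35]; exact hf
      · rw [v03]; exact hp
      · rw [v14]; exact hq
      · rw [v25]; exact hr
    · right
      rintro ⟨ev, em⟩
      rcases edge_cases ev em with rfl|rfl|rfl|rfl|rfl|rfl|rfl|rfl|rfl
      · rw [v01]; exact ha
      · rw [v12]; exact hb
      · rw [v02]; exact hc'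
      · rw [v34]; exact hd
      · rw [v45]; exact he
      · rw [v35]; exact hf
      · rw [v03]; exact hp
      · rw [v14]; exact hq
      · rw [v25]; exact hr
  · intro hc
    have m01 := prism.mem_edgeSet.2 adj01
    have m03 := prism.mem_edgeSet.2 adj03
    rcases hc with hc | hc
    · constructor
      · intro b
        cases b
        · exact ⟨⟨s(0,1), m01⟩, by rw [hc]; exact v01⟩
        · exact ⟨⟨s(0,3), m03⟩, by rw [hc]; exact v03⟩
      · intro u w _
        constructor
        · intro h1
          have key := count_walk c true (fun v => decide (3 ≤ v.val))
            (fun u v h => by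
              rw [hc ⟨s(u,v), prism.mem_edgeSet.2 h⟩]
              exact match_true u v h) w
          exact (key.2 h1) rfl
        · intro h1
          have key := count_walk c false (fun v => ((v.val % 3 : ℕ)))
            (fun u v h => by
              rw [hc ⟨s(u,v), prism.mem_edgeSet.2 h⟩]
              exact match_false u v h) w
          exact (key.2 h1) rfl
    · constructor
      · intro b
        cases b
        · exact ⟨⟨s(0,3), m03⟩, by rw [hc]; simp [v03]⟩
        · exact ⟨⟨s(0,1), m01⟩, by rw [hc]; simp [v01]⟩
      · intro u w _
        constructor
        · intro h1
          have key := count_walk c true (fun v => ((v.val % 3 : ℕ)))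
            (fun u v h => by
              rw [hc ⟨s(u,v), prism.mem_edgeSet.2 h⟩, Bool.not_eq_true']
              exact match_false u v h) w
          exact (key.2 h1) rfl
        · intro h1
          have key := count_walk c false (fun v => decide (3 ≤ v.val))
            (fun u v h => by
              rw [hc ⟨s(u,v), prism.mem_edgeSet.2 h⟩, Bool.not_eq_false']
              exact match_true u v h) w
          exact (key.2 h1) rfl
end

section
/- Let G be a graph obtained by gluing k copies of a graph H (with at least 3 vertices) along a common edge (identifying one fixed edge of each copy). Then nac(G) = (nac(H) + 1)^k − 1, where nac denotes the number of NAC-colourings divided by 2. -/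
open scoped Classical

namespace NAC

/-- The graph obtained by gluing `k` copies of `H` along the edge `uv`: the two shared
vertices are `Sum.inl false` (for `u`) and `Sum.inl true` (for `v`); `Sum.inr (i, s)` is
the copy of the vertex `s ∉ {u, v}` in the `i`-th copy of `H`. -/
def glueCopies (H : SimpleGraph V) (u v : V) (k : ℕ) :
    SimpleGraph (Bool ⊕ (Fin k × {w : V // w ≠ u ∧ w ≠ v})) where
  Adj x y :=
    match x, y with
    | .inl a, .inl b => a ≠ b ∧ H.Adj u v
    | .inl a, .inr (_, s) => H.Adj (if a then v else u) s.1
    | .inr (_, s), .inl a => H.Adj s.1 (if a then v else u)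
    | .inr (i, s), .inr (j, t) => i = j ∧ H.Adj s.1 t.1
  symm := by
    refine ⟨?_⟩
    rintro (a | ⟨i, s⟩) (b | ⟨j, t⟩) h
    · exact ⟨h.1.symm, h.2⟩
    · exact h.symm
    · exact h.symm
    · exact ⟨h.1.symm, h.2.symm⟩
  loopless := by
    refine ⟨?_⟩
    rintro (a | ⟨i, s⟩) h
    · exact h.1 rfl
    · exact H.irrefl h.2

end NAC

/-! A colouring is NAC iff it is surjective and its monochromatic components are induced
subgraphs: a cycle with exactly one edge of colour `b` exists iff some edge of colour `b` has its
ends joined by a path of colour `!b`. This second condition is local to the copies of `H`.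
It restricts to each copy along the inclusion; conversely, `u` and `v` are joined in colour `b`
inside some copy only if the shared edge `uv` has colour `b`, so a path of colour `b` in the glued
graph can be folded into any one copy by sending each vertex of another copy to the end of `uv`
that it reaches. Hence colourings of the glued graph with induced components and a given colour
on `uv` correspond to `k`-tuples of such colourings of `H`. A graph has exactly `nac + 1` of them
for each colour of a fixed edge (the NAC-colourings, split evenly by swapping the colours, and one
constant colouring), so `nac G + 1 = (nac H + 1) ^ k`. -/

namespace NAC

open SimpleGraph

variable {V : Type*} {G : SimpleGraph V}

def colourSubgraph (G : SimpleGraph V) (c : G.edgeSet → Bool) (b : Bool) : SimpleGraph V where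
  Adj x y := ∃ h : G.Adj x y, c ⟨s(x, y), h⟩ = b
  symm := ⟨fun x y ⟨h, hc⟩ => ⟨h.symm, by simpa only [Sym2.eq_swap] using hc⟩⟩
  loopless := ⟨fun x ⟨h, _⟩ => G.irrefl h⟩

def MonoComponentsInduced (G : SimpleGraph V) (c : G.edgeSet → Bool) : Prop :=
  ∀ ⦃b : Bool⦄ ⦃x y : V⦄ (h : G.Adj x y),
    (colourSubgraph G c b).Reachable x y → c ⟨s(x, y), h⟩ = b

variable {c : G.edgeSet → Bool}

lemma cCount_cons_walk {b : Bool} {a a' z : V} (h : G.Adj a a') (p : G.Walk a' z) :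
    cCount G c b (Walk.cons h p).edges =
      cCount G c b p.edges + if c ⟨s(a, a'), h⟩ = b then 1 else 0 := by
  by_cases hc : c ⟨s(a, a'), h⟩ = b <;> simp [cCount, h, hc]

lemma reachable_of_cCount_eq_zero {b : Bool} {a z : V} (w : G.Walk a z)
    (hw : cCount G c b w.edges = 0) : (colourSubgraph G c (!b)).Reachable a z := by
  induction w with
  | nil => rfl
  | @cons a a' z h p ih =>
    rw [cCount_cons_walk] at hw
    split_ifs at hw with hc
    have hadj : (colourSubgraph G c (!b)).Adj a a' := ⟨h, Bool.eq_not.mpr hc⟩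
    exact hadj.reachable.trans (ih hw)

lemma exists_adj_of_cCount_eq_one {b : Bool} {a z : V} (w : G.Walk a z)
    (hw : cCount G c b w.edges = 1) :
    ∃ x y, ∃ h : G.Adj x y, c ⟨s(x, y), h⟩ = b ∧
      (colourSubgraph G c (!b)).Reachable a x ∧ (colourSubgraph G c (!b)).Reachable y z := by
  induction w with
  | nil => simp [cCount] at hw
  | @cons a a' z h p ih =>
    rw [cCount_cons_walk] at hw
    split_ifs at hw with hc
    · exact ⟨a, a', h, hc, .refl a, reachable_of_cCount_eq_zero p (by omega)⟩
    · obtain ⟨x, y, hxy, hcxy, hax, hyz⟩ := ih hw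
      have hadj : (colourSubgraph G c (!b)).Adj a a' := ⟨h, Bool.eq_not.mpr hc⟩
      exact ⟨x, y, hxy, hcxy, hadj.reachable.trans hax, hyz⟩

lemma MonoComponentsInduced.cCount_ne_one (hc : MonoComponentsInduced G c) {a : V}
    (w : G.Walk a a) (b : Bool) : cCount G c b w.edges ≠ 1 := fun hw => by
  obtain ⟨x, y, h, hcol, hax, hya⟩ := exists_adj_of_cCount_eq_one w hw
  simpa [hcol] using hc h (hya.trans hax).symm

lemma colourSubgraph_le (b : Bool) : colourSubgraph G c b ≤ G := fun _ _ h => h.1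

lemma mem_edgeSet_colourSubgraph {b : Bool} {e : Sym2 V} :
    e ∈ (colourSubgraph G c b).edgeSet ↔ ∃ h : e ∈ G.edgeSet, c ⟨e, h⟩ = b := by
  induction e using Sym2.ind
  rfl

lemma cCount_not_eq_zero {b : Bool} {l : List (Sym2 V)}
    (hl : ∀ e ∈ l, e ∈ (colourSubgraph G c b).edgeSet) : cCount G c (!b) l = 0 := by
  simp only [cCount, List.length_eq_zero_iff, List.filter_eq_nil_iff, decide_eq_true_eq]
  rintro e he ⟨h, hne⟩
  obtain ⟨h', hb⟩ := mem_edgeSet_colourSubgraph.mp (hl e he)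
  simp [hb] at hne

lemma IsNAC.monoComponentsInduced (hc : IsNAC G c) : MonoComponentsInduced G c := by
  intro b x y h hxy
  by_contra hne
  obtain ⟨p, hp⟩ := hxy.symm.exists_isPath
  have hp_col :
      ∀ e ∈ (p.mapLe (colourSubgraph_le b)).edges, e ∈ (colourSubgraph G c b).edgeSet := by
    rw [Walk.edges_mapLe_eq_edges]
    exact fun e he => p.edges_subset_edgeSet he
  have hxy_not_mem : s(x, y) ∉ (p.mapLe (colourSubgraph_le b)).edges := fun hmem => by
    obtain ⟨h', hb⟩ := mem_edgeSet_colourSubgraph.mp (hp_col _ hmem)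
    exact hne hb
  have hcycle := Path.cons_isCycle ⟨_, hp.mapLe (colourSubgraph_le b)⟩ h hxy_not_mem
  have hcount :
      cCount G c (!b) (Walk.cons h (p.mapLe (colourSubgraph_le b))).edges = 1 := by
    rw [cCount_cons_walk, cCount_not_eq_zero hp_col, if_pos (Bool.eq_not.mpr hne)]
  cases b
  · exact (hc.2 _ hcycle).1 hcount
  · exact (hc.2 _ hcycle).2 hcount

lemma isNAC_iff : IsNAC G c ↔ Function.Surjective c ∧ MonoComponentsInduced G c :=
  ⟨fun hc => ⟨hc.1, hc.monoComponentsInduced⟩,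
    fun ⟨hs, hc⟩ => ⟨hs, fun _ w _ =>
      ⟨hc.cCount_ne_one w true, hc.cCount_ne_one w false⟩⟩⟩

lemma colourSubgraph_not (b : Bool) :
    colourSubgraph G (fun e => !c e) b = colourSubgraph G c (!b) := by
  ext x y
  simp [colourSubgraph, Bool.not_eq_eq_eq_not]

lemma MonoComponentsInduced.not (hc : MonoComponentsInduced G c) :
    MonoComponentsInduced G (fun e => !c e) := by
  intro b x y h hr
  rw [colourSubgraph_not] at hr
  simp [hc h hr]

lemma IsNAC.not (hc : IsNAC G c) : IsNAC G (fun e => !c e) := by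
  rw [isNAC_iff] at hc ⊢
  exact ⟨Bool.involutive_not.surjective.comp hc.1, hc.2.not⟩

lemma monoComponentsInduced_const (b : Bool) : MonoComponentsInduced G (fun _ => b) := by
  intro b' x y h hr
  by_contra hne
  have hbot : colourSubgraph G (fun _ => b) b' = ⊥ := by
    ext
    simp [colourSubgraph, hne]
  rw [hbot, reachable_bot] at hr
  exact h.ne hr

lemma eq_const_of_not_surjective {α : Type*} {f : α → Bool} (hf : ¬ Function.Surjective f)
    (a : α) : f = fun _ => f a := by
  funext x
  by_contra hx
  refine hf fun b => ?_
  rcases Bool.eq_or_eq_not b (f a) with rfl | rfl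
  · exact ⟨a, rfl⟩
  · exact ⟨x, Bool.eq_not.mpr hx⟩

lemma ncard_forall_mem {ι β : Type*} [Finite ι] (s : Set β) :
    {f : ι → β | ∀ i, f i ∈ s}.ncard = s.ncard ^ Nat.card ι := by
  rw [← Nat.card_coe_set_eq, ← Nat.card_coe_set_eq s, ← Nat.card_fun]
  exact Nat.card_congr Equiv.subtypePiEquivPi

section Counting

variable [Finite V]

lemma ncard_isNAC_and_eq (e : G.edgeSet) (b : Bool) :
    {c | IsNAC G c ∧ c e = b}.ncard = nacNum G := by
  have hflip : {c | IsNAC G c ∧ c e = b}.ncard = {c | IsNAC G c ∧ c e = !b}.ncard := by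
    refine Set.ncard_congr (fun c _ e => !c e) (fun c ⟨hc, hb⟩ => ⟨hc.not, by simp [hb]⟩)
      (fun c c' _ _ h => ?_)
      (fun c ⟨hc, hb⟩ => ⟨fun e => !c e, ⟨hc.not, by simp [hb]⟩, ?_⟩)
    · funext e
      simpa using congrFun h e
    · simp
  have hunion : {c | IsNAC G c} = {c | IsNAC G c ∧ c e = b} ∪ {c | IsNAC G c ∧ c e = !b} := by
    ext c
    rcases Bool.eq_or_eq_not (c e) b with hb | hb <;> simp [hb]
  have hdisj : Disjoint {c | IsNAC G c ∧ c e = b} {c | IsNAC G c ∧ c e = !b} :=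
    Set.disjoint_left.mpr fun c ⟨_, hb⟩ ⟨_, hb'⟩ => by simp [hb] at hb'
  rw [nacNum, hunion, Set.ncard_union_eq hdisj, ← hflip]
  omega

lemma ncard_monoComponentsInduced_and_eq (e : G.edgeSet) (b : Bool) :
    {c | MonoComponentsInduced G c ∧ c e = b}.ncard = nacNum G + 1 := by
  have hinsert : {c | MonoComponentsInduced G c ∧ c e = b} =
      insert (fun _ => b) {c | IsNAC G c ∧ c e = b} := by
    ext c
    simp only [Set.mem_insert_iff, Set.mem_ofPred_eq, isNAC_iff]
    constructor
    · rintro ⟨hc, rfl⟩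
      by_cases hs : Function.Surjective c
      · exact .inr ⟨⟨hs, hc⟩, rfl⟩
      · exact .inl (eq_const_of_not_surjective hs e)
    · rintro (rfl | ⟨⟨-, hc⟩, hb⟩)
      · exact ⟨monoComponentsInduced_const b, rfl⟩
      · exact ⟨hc, hb⟩
  have hconst : (fun _ => b) ∉ {c : G.edgeSet → Bool | IsNAC G c ∧ c e = b} :=
    fun ⟨hc, _⟩ => by
    obtain ⟨_, h⟩ := hc.1 (!b)
    simp at h
  rw [hinsert, Set.ncard_insert_of_notMem hconst, ncard_isNAC_and_eq]

end Counting

section Maps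

variable {W : Type*} {G' : SimpleGraph W}

lemma reachable_map_of_adj (f : V → W)
    (hf : ∀ ⦃x y⦄, G.Adj x y → G'.Reachable (f x) (f y))
    {x y : V} (h : G.Reachable x y) : G'.Reachable (f x) (f y) := by
  rw [reachable_iff_reflTransGen] at h ⊢
  exact Relation.ReflTransGen.lift' f
    (fun x y hxy => (reachable_iff_reflTransGen _ _).mp (hf hxy)) _ _ h

lemma colourSubgraph_comp_mapEdgeSet_adj (f : G →g G') (c : G'.edgeSet → Bool) {b : Bool}
    {x y : V} : (colourSubgraph G (c ∘ f.mapEdgeSet) b).Adj x y ↔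
      G.Adj x y ∧ (colourSubgraph G' c b).Adj (f x) (f y) :=
  ⟨fun ⟨h, hc⟩ => ⟨h, f.map_adj h, hc⟩, fun ⟨h, _, hc⟩ => ⟨h, hc⟩⟩

lemma MonoComponentsInduced.comp_mapEdgeSet {c : G'.edgeSet → Bool} (f : G →g G')
    (hc : MonoComponentsInduced G' c) : MonoComponentsInduced G (c ∘ f.mapEdgeSet) :=
  fun _ _ _ h hr => hc (f.map_adj h) <| reachable_map_of_adj f
    (fun _ _ hxy => ((colourSubgraph_comp_mapEdgeSet_adj f c).mp hxy).2.reachable) hr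

end Maps

namespace glueCopies

variable {H : SimpleGraph V} {u v : V} {k : ℕ}

noncomputable def incl (H : SimpleGraph V) (u v : V) (i : Fin k) : H →g glueCopies H u v k where
  toFun w :=
    if hu : w = u then .inl false else if hv : w = v then .inl true else .inr (i, ⟨w, hu, hv⟩)
  map_rel' {a a'} h := by
    split_ifs <;> subst_vars <;> simp_all [glueCopies, h.symm]

def proj (H : SimpleGraph V) : glueCopies H u v k →g H where
  toFun
    | .inl a => if a then v else u
    | .inr (_, s) => s.1
  map_rel' {x y} h := by
    rcases x with (_ | _) | ⟨i, s⟩ <;> rcases y with (_ | _) | ⟨j, t⟩ <;>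
      simp_all [glueCopies, SimpleGraph.adj_comm]

@[simp] lemma proj_incl (i : Fin k) (a : V) : proj H (incl H u v i a) = a := by
  simp only [incl, proj, RelHom.coeFn_mk]
  split_ifs <;> simp_all

lemma incl_u (i : Fin k) : incl H u v i u = .inl false := by
  simp [incl]

lemma incl_v (hne : u ≠ v) (i : Fin k) : incl H u v i v = .inl true := by
  simp [incl, hne.symm]

lemma incl_inr (i : Fin k) (s : {w : V // w ≠ u ∧ w ≠ v}) :
    incl H u v i s.1 = .inr (i, s) := by
  simp [incl, s.2.1, s.2.2]

lemma incl_ite (hne : u ≠ v) (i : Fin k) (a : Bool) :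
    incl H u v i (if a then v else u) = .inl a := by
  cases a
  · exact incl_u i
  · exact incl_v hne i

lemma eq_or_eq_of_incl_eq {i j : Fin k} (hij : i ≠ j) {a : V}
    (h : incl H u v i a = incl H u v j a) : a = u ∨ a = v := by
  by_contra! ha
  rw [incl_inr i ⟨a, ha⟩, incl_inr j ⟨a, ha⟩] at h
  simp_all

lemma exists_eq_incl_of_adj (hne : u ≠ v) (hk : 1 ≤ k)
    {x y : Bool ⊕ (Fin k × {w : V // w ≠ u ∧ w ≠ v})} (h : (glueCopies H u v k).Adj x y) :
    ∃ i a a', H.Adj a a' ∧ x = incl H u v i a ∧ y = incl H u v i a' := by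
  suffices ∃ i, incl H u v i (proj H x) = x ∧ incl H u v i (proj H y) = y by
    obtain ⟨i, hx, hy⟩ := this
    exact ⟨i, _, _, (proj H).map_adj h, hx.symm, hy.symm⟩
  rcases x with a | ⟨i, s⟩ <;> rcases y with a' | ⟨j, t⟩
  · exact ⟨⟨0, hk⟩, incl_ite hne _ a, incl_ite hne _ a'⟩
  · exact ⟨j, incl_ite hne _ a, incl_inr j t⟩
  · exact ⟨i, incl_inr i s, incl_ite hne _ a'⟩
  · obtain ⟨rfl, -⟩ := h
    exact ⟨i, incl_inr i s, incl_inr i t⟩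

noncomputable def restrict (c : (glueCopies H u v k).edgeSet → Bool) (i : Fin k) :
    H.edgeSet → Bool :=
  c ∘ (incl H u v i).mapEdgeSet

lemma restrict_uv (huv : H.Adj u v) (c : (glueCopies H u v k).edgeSet → Bool) (i j : Fin k) :
    restrict c i ⟨s(u, v), huv⟩ = restrict c j ⟨s(u, v), huv⟩ := by
  simp only [restrict, Function.comp_apply]
  congr 1
  ext
  simp [incl_u, incl_v huv.ne]

section Retraction

variable (c : (glueCopies H u v k).edgeSet → Bool) (b : Bool) (i : Fin k)

noncomputable def retraction : Bool ⊕ (Fin k × {w : V // w ≠ u ∧ w ≠ v}) → V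
  | .inl a => if a then v else u
  | .inr (j, s) => if j = i then s.1 else
      if (colourSubgraph H (restrict c j) b).Reachable s.1 v then v else u

lemma retraction_incl_self (a : V) : retraction c b i (incl H u v i a) = a := by
  simp only [incl, RelHom.coeFn_mk]
  split_ifs <;> simp [retraction, *]

lemma reachable_retraction_incl (hne : u ≠ v) {j : Fin k} (hji : j ≠ i)
    (huv : (colourSubgraph H (restrict c j) b).Reachable u v →
      (colourSubgraph H (restrict c i) b).Reachable u v) (a : V) :
    (colourSubgraph H (restrict c i) b).Reachable (retraction c b i (incl H u v j a))
      (if (colourSubgraph H (restrict c j) b).Reachable a v then v else u) := by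
  by_cases hau : a = u
  · subst hau
    rw [incl_u]
    split_ifs with h
    · exact huv h
    · rfl
  by_cases hav : a = v
  · subst hav
    simp [incl_v hne, retraction]
  · simp [incl_inr j ⟨a, hau, hav⟩, retraction, hji]

lemma reachable_retraction (huv : H.Adj u v) (hk : 1 ≤ k)
    (hc : ∀ j, MonoComponentsInduced H (restrict c j))
    {x y : Bool ⊕ (Fin k × {w : V // w ≠ u ∧ w ≠ v})}
    (h : (colourSubgraph (glueCopies H u v k) c b).Reachable x y) :
    (colourSubgraph H (restrict c i) b).Reachable (retraction c b i x) (retraction c b i y) := by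
  have huv_i (j : Fin k) (hj : (colourSubgraph H (restrict c j) b).Reachable u v) :
      (colourSubgraph H (restrict c i) b).Reachable u v :=
    Adj.reachable ⟨huv, (restrict_uv huv c i j).trans (hc j huv hj)⟩
  refine reachable_map_of_adj _ (fun x y hxy => ?_) h
  obtain ⟨j, a, a', haa', rfl, rfl⟩ := exists_eq_incl_of_adj huv.ne hk hxy.1
  have hcol : (colourSubgraph H (restrict c j) b).Adj a a' := ⟨haa', hxy.2⟩
  by_cases hji : j = i
  · subst hji
    rw [retraction_incl_self, retraction_incl_self]
    exact hcol.reachable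
  · have hside : (colourSubgraph H (restrict c j) b).Reachable a v ↔
        (colourSubgraph H (restrict c j) b).Reachable a' v :=
      ⟨hcol.symm.reachable.trans, hcol.reachable.trans⟩
    refine (reachable_retraction_incl c b i huv.ne hji (huv_i j) a).trans ?_
    simp only [hside]
    exact (reachable_retraction_incl c b i huv.ne hji (huv_i j) a').symm

end Retraction

lemma monoComponentsInduced_iff (huv : H.Adj u v) (hk : 1 ≤ k)
    (c : (glueCopies H u v k).edgeSet → Bool) :
    MonoComponentsInduced (glueCopies H u v k) c ↔
      ∀ i, MonoComponentsInduced H (restrict c i) := by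
  refine ⟨fun hc i => hc.comp_mapEdgeSet (incl H u v i), fun hc b x y hxy hr => ?_⟩
  obtain ⟨i, a, a', haa', rfl, rfl⟩ := exists_eq_incl_of_adj huv.ne hk hxy
  have h := reachable_retraction c b i huv hk hc hr
  rw [retraction_incl_self, retraction_incl_self] at h
  exact hc i haa' h

lemma restrict_injective (hne : u ≠ v) (hk : 1 ≤ k) :
    Function.Injective (restrict : ((glueCopies H u v k).edgeSet → Bool) → _) := by
  intro c c' h
  funext ⟨e, he⟩
  induction e using Sym2.ind with | _ x y
  obtain ⟨i, a, a', haa', rfl, rfl⟩ := exists_eq_incl_of_adj hne hk he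
  exact congrFun (congrFun h i) ⟨s(a, a'), haa'⟩

lemma eq_and_of_mapEdgeSet_incl_eq (hne : u ≠ v) {i j : Fin k} {e e' : H.edgeSet}
    (h : (incl H u v i).mapEdgeSet e = (incl H u v j).mapEdgeSet e') :
    e = e' ∧ (i = j ∨ e.1 = s(u, v)) := by
  have hproj := congrArg (fun E => Sym2.map (proj H) E.1) h
  simp only [Hom.mapEdgeSet_coe, Sym2.map_map, Function.comp_def, proj_incl,
    Sym2.map_id'] at hproj
  obtain rfl := Subtype.ext hproj
  refine ⟨rfl, or_iff_not_imp_left.mpr fun hij => ?_⟩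
  have hmem (x : V) (hx : x ∈ e.1) : x = u ∨ x = v := by
    have : incl H u v i x ∈ Sym2.map (incl H u v j) e.1 := by
      rw [← Hom.mapEdgeSet_coe, ← h, Hom.mapEdgeSet_coe]
      exact Sym2.mem_map.mpr ⟨x, hx, rfl⟩
    obtain ⟨y, -, hy⟩ := Sym2.mem_map.mp this
    obtain rfl : y = x := by simpa using congrArg (proj H) hy
    exact eq_or_eq_of_incl_eq hij hy.symm
  obtain ⟨e, he⟩ := e
  induction e using Sym2.ind with | _ x y
  have hx := hmem x (Sym2.mem_mk_left x y)
  have hy := hmem y (Sym2.mem_mk_right x y)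
  rcases hx with rfl | rfl <;> rcases hy with rfl | rfl
  · exact absurd he (H.loopless.irrefl _)
  · rfl
  · exact Sym2.eq_swap
  · exact absurd he (H.loopless.irrefl _)

noncomputable def glue (d : Fin k → H.edgeSet → Bool) : (glueCopies H u v k).edgeSet → Bool :=
  fun E => decide (∃ i e, (incl H u v i).mapEdgeSet e = E ∧ d i e = true)

lemma restrict_glue (huv : H.Adj u v) {d : Fin k → H.edgeSet → Bool}
    (hd : ∀ i j, d i ⟨s(u, v), huv⟩ = d j ⟨s(u, v), huv⟩) :
    restrict (glue d : (glueCopies H u v k).edgeSet → Bool) = d := by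
  funext i e
  rw [Bool.eq_iff_iff]
  simp only [restrict, glue, Function.comp_apply, decide_eq_true_eq]
  refine ⟨fun ⟨j, e', heq, hd'⟩ => ?_, fun h => ⟨i, e, rfl, h⟩⟩
  obtain ⟨rfl, rfl | he⟩ := eq_and_of_mapEdgeSet_incl_eq huv.ne heq
  · exact hd'
  · obtain ⟨e, h⟩ := e'
    simp only at he
    subst he
    rwa [hd i j]

lemma ncard_monoComponentsInduced_glue (huv : H.Adj u v) (hk : 1 ≤ k) (b : Bool) :
    {c : (glueCopies H u v k).edgeSet → Bool | MonoComponentsInduced _ c ∧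
        c ((incl H u v ⟨0, hk⟩).mapEdgeSet ⟨s(u, v), huv⟩) = b}.ncard =
      {d : Fin k → H.edgeSet → Bool |
        ∀ i, MonoComponentsInduced H (d i) ∧ d i ⟨s(u, v), huv⟩ = b}.ncard := by
  refine Set.ncard_congr (fun c _ => restrict c) (fun c ⟨hc, hb⟩ i => ?_)
    (fun c c' _ _ h => restrict_injective huv.ne hk h) (fun d hd => ?_)
  · exact ⟨(monoComponentsInduced_iff huv hk c).mp hc i, (restrict_uv huv c i _).trans hb⟩
  · have hglue := restrict_glue huv (fun i j => (hd i).2.trans (hd j).2.symm)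
    refine ⟨glue d, ⟨(monoComponentsInduced_iff huv hk _).mpr ?_, ?_⟩, hglue⟩
    · rw [hglue]
      exact fun i => (hd i).1
    · exact (congrFun (congrFun hglue _) _).trans (hd _).2

end glueCopies

end NAC

open NAC in
theorem statement15_general {V : Type*} [Fintype V] (H : SimpleGraph V)
    (u v : V) (huv : H.Adj u v) (k : ℕ) (hk : 1 ≤ k) :
    nacNum (glueCopies H u v k) = (nacNum H + 1) ^ k - 1 := by
  have key : nacNum (glueCopies H u v k) + 1 = (nacNum H + 1) ^ k :=
    calc nacNum (glueCopies H u v k) + 1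
        = {c | MonoComponentsInduced _ c ∧
            c ((glueCopies.incl H u v ⟨0, hk⟩).mapEdgeSet ⟨s(u, v), huv⟩) = true}.ncard :=
          (ncard_monoComponentsInduced_and_eq _ true).symm
      _ = {d : Fin k → H.edgeSet → Bool |
            ∀ i, d i ∈ {c | MonoComponentsInduced H c ∧ c ⟨s(u, v), huv⟩ = true}}.ncard :=
          glueCopies.ncard_monoComponentsInduced_glue huv hk true
      _ = (nacNum H + 1) ^ k := by
          rw [ncard_forall_mem, ncard_monoComponentsInduced_and_eq, Nat.card_fin]
  omega

open NAC in
/-- If `G` is obtained by gluing `k ≥ 1` copies of `H` (on at least 3 vertices) along an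
edge `uv`, then `nac(G) = (nac(H) + 1)^k - 1`. -/
theorem statement15 {V : Type*} [Fintype V] (H : SimpleGraph V)
    (h3 : 3 ≤ Fintype.card V) (u v : V) (huv : H.Adj u v) (k : ℕ) (hk : 1 ≤ k) :
    nacNum (glueCopies H u v k) = (nacNum H + 1) ^ k - 1 :=
  statement15_general H u v huv k hk
end
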